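/- Let v_0,…,v_{n−1} ∈ ℝ² be the vertices, in counterclockwise order, of a convex n-gon, let σ > 0 and let m ≥ 1 be an integer with n > m + 2. Suppose that for every index i (mod n) the diagonal (v_i, v_{i+m+1}) has a unique witness w_i — i.e. v_i ≺ w_i ≺ v_{i+m+1}, dist(w_i, [v_i, v_{i+m+1}]) > σ, and dist(x, [v_i, v_{i+m+1}]) ≤ σ for every other vertex x with v_i ≺ x ≺ v_{i+m+1} — and that the map i ↦ w_i is a bijection of the vertex set. Then there exists an integer r with 0 < r ≤ m such that w_i = v_{i+r} for every i. -/

import Mathlib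

/-!
STATEMENT 14: Let v_0,…,v_{n−1} ∈ ℝ² be the vertices, in counterclockwise order,
of a convex n-gon, let σ > 0 and let m ≥ 1 be an integer with n > m + 2.
Suppose that for every index i (mod n) the diagonal (v_i, v_{i+m+1}) has a
unique witness w_i — i.e. v_i ≺ w_i ≺ v_{i+m+1},
dist(w_i, [v_i, v_{i+m+1}]) > σ, and dist(x, [v_i, v_{i+m+1}]) ≤ σ for every
other vertex x with v_i ≺ x ≺ v_{i+m+1} — and that the map i ↦ w_i is a
bijection of the vertex set.  Then there exists an integer r with 0 < r ≤ m such
that w_i = v_{i+r} for every i.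
-/

noncomputable section

abbrev Pt := EuclideanSpace ℝ (Fin 2)

/-- `ccw3 a b c` : the triple `(a, b, c)` is positively (counterclockwise) oriented. -/
def ccw3 (a b c : Pt) : Prop :=
  0 < (b 0 - a 0) * (c 1 - a 1) - (b 1 - a 1) * (c 0 - a 0)

/-- `CBtw i j l` : in the counterclockwise cyclic order of `ZMod n`, a traversal
starting at `i` meets `j` strictly after `i` and strictly before `l`. -/
def CBtw {n : ℕ} (i j l : ZMod n) : Prop :=
  0 < (j - i).val ∧ (j - i).val < (l - i).val

/-- The points `v 0, v 1, …, v (n-1)` are the vertices, in counterclockwise order,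
of a convex `n`-gon. -/
def ConvexCCW {n : ℕ} (v : ZMod n → Pt) : Prop :=
  ∀ i j l : ZMod n, CBtw i j l → ccw3 (v i) (v j) (v l)


/-!
Write `w i = i + r i` with `1 ≤ r i ≤ m`. A function on `ZMod n` that never decreases from `i`
to `i + 1` is constant, so it suffices to show `r i ≤ r (i + 1)`. If `r (i + 1) = r i - 1` then
`w (i + 1) = w i`, contradicting injectivity. If `r (i + 1) + 1 < r i`, the vertices
`v i, v (i + 1), v (w (i + 1)), v (w i), v (i + m + 1), v (i + m + 2)` form a convex hexagon
`a b p q c d` in which `p` is closer to the diagonal `[a, c]` than to `[b, d]` while `q` is closer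
to `[b, d]` than to `[a, c]`. That is impossible: the nearest point `X` to `p` on `[a, c]` lies on
`p`'s side of the line `bd`, and symmetrically for the nearest point `Y` to `q` on `[b, d]`, so
`p q X Y` is a convex quadrilateral whose diagonals `[p, X]` and `[q, Y]` meet at some `z`; the
triangle inequality through `z` then gives `dist p Y + dist q X ≤ dist p X + dist q Y`.
-/

open Metric

theorem mem_segment_or_mem_segment {𝕜 E : Type*} [Field 𝕜] [LinearOrder 𝕜]
    [IsStrictOrderedRing 𝕜] [AddCommGroup E] [Module 𝕜 E] {a c z x : E} (hz : z ∈ segment 𝕜 a c)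
    (hx : x ∈ segment 𝕜 a c) : x ∈ segment 𝕜 a z ∨ x ∈ segment 𝕜 z c := by
  simp only [mem_segment_iff_wbtw] at *
  rcases eq_or_ne a c with rfl | hac
  · simp_all
  have hray : SameRay 𝕜 (z -ᵥ a) (x -ᵥ a) :=
    hz.sameRay_vsub_left.trans hx.sameRay_vsub_left.symm
      fun h => absurd (vsub_eq_zero_iff_eq.1 h).symm hac
  rcases wbtw_total_of_sameRay_vsub_left hray with h | h
  · exact Or.inr (hx.trans_left_right h)
  · exact Or.inl h

theorem dist_add_dist_le_of_mem_segment {E : Type*} [NormedAddCommGroup E] [NormedSpace ℝ E]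
    {p q x y z : E} (hp : z ∈ segment ℝ p x) (hq : z ∈ segment ℝ q y) :
    dist p y + dist q x ≤ dist p x + dist q y := by
  rw [← dist_add_dist_of_mem_segment hp, ← dist_add_dist_of_mem_segment hq]
  linarith [dist_triangle p z y, dist_triangle q z x]

theorem isCompact_segment {E : Type*} [AddCommGroup E] [Module ℝ E] [TopologicalSpace E]
    [IsTopologicalAddGroup E] [ContinuousSMul ℝ E] (a b : E) : IsCompact (segment ℝ a b) :=
  convexHull_pair (𝕜 := ℝ) a b ▸ (Set.toFinite _).isCompact_convexHull ℝ

theorem ZMod.apply_eq_of_forall_le_apply_add_one {n : ℕ} [NeZero n] {α : Type*} [PartialOrder α]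
    {f : ZMod n → α} (h : ∀ i, f i ≤ f (i + 1)) (i j : ZMod n) : f i = f j := by
  have hadd : ∀ i (k : ℕ), f i ≤ f (i + k) := by
    intro i k
    induction k with
    | zero => simp
    | succ k ih => exact ih.trans (by simpa [add_assoc] using h (i + k))
  have hle : ∀ i j, f i ≤ f j := fun i j => by simpa using hadd i (j - i).val
  exact (hle i j).antisymm (hle j i)

section Orientation

/-- Twice the signed area of the triangle `a b c`, so that `ccw3 a b c ↔ 0 < orient a b c`. -/
def orient (a b c : Pt) : ℝ :=
  (b 0 - a 0) * (c 1 - a 1) - (b 1 - a 1) * (c 0 - a 0)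

theorem orient_rotate (a b c : Pt) : orient a b c = orient b c a := by
  unfold orient; ring

theorem orient_swap (a b c : Pt) : orient a b c = -orient a c b := by
  unfold orient; ring

theorem orient_self₁₃ (a b : Pt) : orient a b a = 0 := by
  unfold orient; ring

theorem orient_self₂₃ (a b : Pt) : orient a b b = 0 := by
  unfold orient; ring

theorem orient_smul_add_smul (a b u v : Pt) (t : ℝ) :
    orient a b ((1 - t) • u + t • v) = (1 - t) * orient a b u + t * orient a b v := by
  simp only [orient, PiLp.add_apply, PiLp.smul_apply, smul_eq_mul]; ring

theorem continuous_orient (a b : Pt) : Continuous (orient a b) := by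
  unfold orient; fun_prop

variable {a b u v z : Pt}

theorem orient_eq_zero_of_mem_segment (hz : z ∈ segment ℝ a b) : orient a b z = 0 := by
  rw [segment_eq_image] at hz
  obtain ⟨t, -, rfl⟩ := hz
  rw [orient_smul_add_smul, orient_self₁₃, orient_self₂₃]; ring

theorem orient_nonneg_of_mem_segment (hz : z ∈ segment ℝ u v)
    (hu : 0 ≤ orient a b u) (hv : 0 ≤ orient a b v) : 0 ≤ orient a b z := by
  rw [segment_eq_image] at hz
  obtain ⟨t, ⟨ht0, ht1⟩, rfl⟩ := hz
  rw [orient_smul_add_smul]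
  exact add_nonneg (mul_nonneg (sub_nonneg.2 ht1) hu) (mul_nonneg ht0 hv)

theorem orient_pos_of_mem_segment_of_ne (hz : z ∈ segment ℝ u v) (hzu : z ≠ u)
    (hu : 0 ≤ orient a b u) (hv : 0 < orient a b v) : 0 < orient a b z := by
  rw [segment_eq_image] at hz
  obtain ⟨t, ⟨ht0, ht1⟩, rfl⟩ := hz
  have ht : 0 < t := ht0.lt_of_ne (by rintro rfl; simp at hzu)
  rw [orient_smul_add_smul]
  exact add_pos_of_nonneg_of_pos (mul_nonneg (sub_nonneg.2 ht1) hu) (mul_pos ht hv)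

theorem orient_pos_of_mem_segment (hz : z ∈ segment ℝ u v)
    (hu : 0 < orient a b u) (hv : 0 < orient a b v) : 0 < orient a b z := by
  rcases eq_or_ne z u with rfl | hzu
  · exact hu
  · exact orient_pos_of_mem_segment_of_ne hz hzu hu.le hv

theorem exists_mem_segment_orient_eq_zero (hu : orient a b u ≤ 0) (hv : 0 ≤ orient a b v) :
    ∃ z ∈ segment ℝ u v, orient a b z = 0 :=
  (convex_segment u v).isPreconnected.intermediate_value (left_mem_segment ℝ u v)
    (right_mem_segment ℝ u v) (continuous_orient a b).continuousOn ⟨hu, hv⟩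

theorem exists_eq_smul_add_smul_of_orient_eq_zero (hab : a ≠ b) (hz : orient a b z = 0) :
    ∃ μ : ℝ, z = (1 - μ) • a + μ • b := by
  have hL : (b 0 - a 0) ^ 2 + (b 1 - a 1) ^ 2 ≠ 0 := by
    intro h0
    apply hab
    ext j
    fin_cases j <;> simp <;> nlinarith [sq_nonneg (b 0 - a 0), sq_nonneg (b 1 - a 1)]
  refine ⟨((z 0 - a 0) * (b 0 - a 0) + (z 1 - a 1) * (b 1 - a 1)) /
    ((b 0 - a 0) ^ 2 + (b 1 - a 1) ^ 2), ?_⟩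
  unfold orient at hz
  ext j
  fin_cases j <;> simp <;> field_simp
  · linear_combination (a 1 - b 1) * hz
  · linear_combination (b 0 - a 0) * hz

/-- A point `z` of the line `ab` lies on the segment `[a, b]` if it is on the nonnegative side of
two lines `g₁ g₂` and `h₁ h₂` that separate `a` from `b` in opposite directions. -/
theorem mem_segment_of_orient_eq_zero {g₁ g₂ h₁ h₂ : Pt} (hz : orient a b z = 0)
    (hga : orient g₁ g₂ a < 0) (hgb : 0 < orient g₁ g₂ b) (hgz : 0 ≤ orient g₁ g₂ z)
    (hhb : orient h₁ h₂ b < 0) (hha : 0 < orient h₁ h₂ a) (hhz : 0 ≤ orient h₁ h₂ z) :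
    z ∈ segment ℝ a b := by
  have hab : a ≠ b := by rintro rfl; linarith
  obtain ⟨μ, rfl⟩ := exists_eq_smul_add_smul_of_orient_eq_zero hab hz
  rw [orient_smul_add_smul] at hgz hhz
  rw [segment_eq_image]
  exact ⟨μ, ⟨by nlinarith, by nlinarith⟩, rfl⟩

theorem segment_inter_nonempty_of_orient_pos {p q x y : Pt} (h₁ : 0 < orient p q x)
    (h₂ : 0 < orient q x y) (h₃ : 0 < orient x y p) (h₄ : 0 < orient y p q) :
    (segment ℝ p x ∩ segment ℝ q y).Nonempty := by
  obtain ⟨z, hz, hz0⟩ := exists_mem_segment_orient_eq_zero (a := q) (b := y) (u := x) (v := p)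
    (by rw [orient_swap]; linarith) (by rw [orient_rotate]; exact h₄.le)
  rw [segment_symm] at hz
  refine ⟨z, hz, mem_segment_of_orient_eq_zero (g₁ := p) (g₂ := x) (h₁ := x) (h₂ := p) hz0
    (by rw [orient_swap]; linarith) (by rw [orient_rotate]; exact h₃)
    (orient_eq_zero_of_mem_segment hz).ge (by rw [orient_swap]; linarith)
    (by rw [orient_rotate]; exact h₁)
    (orient_eq_zero_of_mem_segment (segment_symm ℝ p x ▸ hz)).ge⟩

theorem orient_neg_of_dist_lt_infDist {p x : Pt} (hp : orient a b p < 0)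
    (hx : dist p x < infDist p (segment ℝ a b))
    (hline : ∀ z ∈ segment ℝ p x, orient a b z = 0 → z ∈ segment ℝ a b) :
    orient a b x < 0 := by
  by_contra! hx0
  obtain ⟨z, hz, hz0⟩ := exists_mem_segment_orient_eq_zero hp.le hx0
  have hpz : dist p z ≤ dist p x := by
    rw [← dist_add_dist_of_mem_segment hz]; exact le_add_of_nonneg_right dist_nonneg
  linarith [infDist_le_dist_of_mem (x := p) (hline z hz hz0)]

theorem mem_segment_of_orient_neg {c x g₁ g₂ : Pt} (hz : z ∈ segment ℝ a c)
    (hx : x ∈ segment ℝ a c) (ha : 0 ≤ orient g₁ g₂ a) (hz0 : 0 ≤ orient g₁ g₂ z)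
    (hx0 : orient g₁ g₂ x < 0) : x ∈ segment ℝ z c ∧ x ≠ z := by
  refine ⟨(mem_segment_or_mem_segment hz hx).resolve_left fun h => ?_, by rintro rfl; linarith⟩
  linarith [orient_nonneg_of_mem_segment h ha hz0]

end Orientation

section ConvexTuple

def ConvexCCWTuple {k : ℕ} (P : Fin k → Pt) : Prop :=
  ∀ i j l : Fin k, i < j → j < l → ccw3 (P i) (P j) (P l)

variable {k : ℕ} {P : Fin k → Pt}

theorem ConvexCCWTuple.orient_pos (hP : ConvexCCWTuple P) (i j l : Fin k)
    (h : i < j ∧ j < l ∨ j < l ∧ l < i ∨ l < i ∧ i < j := by decide) :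
    0 < orient (P i) (P j) (P l) := by
  rcases h with ⟨h₁, h₂⟩ | ⟨h₁, h₂⟩ | ⟨h₁, h₂⟩
  · exact hP i j l h₁ h₂
  · rw [orient_rotate]; exact hP j l i h₁ h₂
  · rw [orient_rotate, orient_rotate]; exact hP l i j h₁ h₂

theorem ConvexCCWTuple.orient_neg (hP : ConvexCCWTuple P) (i j l : Fin k)
    (h : i < l ∧ l < j ∨ l < j ∧ j < i ∨ j < i ∧ i < l := by decide) :
    orient (P i) (P j) (P l) < 0 := by
  rw [orient_swap]; exact neg_neg_of_pos (hP.orient_pos i l j h)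

end ConvexTuple

theorem segment_inter_nonempty_of_convexCCWTuple {a b p q c d X Y : Pt}
    (hP : ConvexCCWTuple ![a, b, p, q, c, d]) (hX : X ∈ segment ℝ a c) (hXbd : orient b d X < 0)
    (hY : Y ∈ segment ℝ b d) (hYac : orient a c Y < 0) :
    (segment ℝ p X ∩ segment ℝ q Y).Nonempty := by
  obtain ⟨Z, hZac, hZbd⟩ : (segment ℝ a c ∩ segment ℝ b d).Nonempty :=
    segment_inter_nonempty_of_orient_pos (hP.orient_pos 0 1 4)
    (hP.orient_pos 1 4 5) (hP.orient_pos 4 5 0) (hP.orient_pos 5 0 1)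
  obtain ⟨hXZc, hXZ⟩ := mem_segment_of_orient_neg hZac hX (hP.orient_pos 1 5 0).le
    (orient_eq_zero_of_mem_segment hZbd).ge hXbd
  obtain ⟨hYZb, hYZ⟩ := mem_segment_of_orient_neg (segment_symm ℝ b d ▸ hZbd)
    (segment_symm ℝ b d ▸ hY) (hP.orient_pos 0 4 5).le (orient_eq_zero_of_mem_segment hZac).ge
    hYac
  have hqZb : 0 < orient q Z b := by
    rw [← orient_rotate]
    exact orient_pos_of_mem_segment hZac (hP.orient_pos 1 3 0) (hP.orient_pos 1 3 4)
  have hqcZ : 0 < orient q c Z :=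
    orient_pos_of_mem_segment hZbd (hP.orient_pos 3 4 1) (hP.orient_pos 3 4 5)
  have hbpZ : 0 < orient b p Z :=
    orient_pos_of_mem_segment hZac (hP.orient_pos 1 2 0) (hP.orient_pos 1 2 4)
  have hpcZ : 0 < orient p c Z :=
    orient_pos_of_mem_segment hZbd (hP.orient_pos 2 4 1) (hP.orient_pos 2 4 5)
  have hpqX : 0 < orient p q X :=
    orient_pos_of_mem_segment hX (hP.orient_pos 2 3 0) (hP.orient_pos 2 3 4)
  have hqXY : 0 < orient q X Y := by
    rw [← orient_rotate]
    refine orient_pos_of_mem_segment_of_ne hXZc hXZ ?_ ?_ <;> rw [orient_rotate]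
    · exact orient_nonneg_of_mem_segment hYZb (orient_self₂₃ q Z).ge hqZb.le
    · exact orient_pos_of_mem_segment hYZb hqcZ (hP.orient_pos 3 4 1)
  have hXYp : 0 < orient X Y p := by
    rw [← orient_rotate]
    refine orient_pos_of_mem_segment_of_ne hYZb hYZ ?_ ?_ <;> rw [← orient_rotate]
    · exact orient_nonneg_of_mem_segment hXZc (orient_self₁₃ Z p).ge
        (by rw [orient_rotate]; exact hpcZ.le)
    · exact orient_pos_of_mem_segment hXZc hbpZ (hP.orient_pos 1 2 4)
  have hYpq : 0 < orient Y p q := by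
    rw [orient_rotate]
    exact orient_pos_of_mem_segment hY (hP.orient_pos 2 3 1) (hP.orient_pos 2 3 5)
  exact segment_inter_nonempty_of_orient_pos hpqX hqXY hXYp hYpq

theorem infDist_le_of_convexCCWTuple {a b p q c d : Pt} (hP : ConvexCCWTuple ![a, b, p, q, c, d])
    (hp : infDist p (segment ℝ a c) < infDist p (segment ℝ b d)) :
    infDist q (segment ℝ a c) ≤ infDist q (segment ℝ b d) := by
  by_contra! hq
  obtain ⟨X, hX, hpX⟩ :=
    (isCompact_segment a c).exists_infDist_eq_dist ⟨a, left_mem_segment ℝ a c⟩ p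
  obtain ⟨Y, hY, hqY⟩ :=
    (isCompact_segment b d).exists_infDist_eq_dist ⟨b, left_mem_segment ℝ b d⟩ q
  -- The lines `ap` and `ca` (for `Y`: `db` and `qd`) keep the crossing point inside `[b, d]`.
  have hXbd : orient b d X < 0 := by
    refine orient_neg_of_dist_lt_infDist (hP.orient_neg 1 5 2) (hpX ▸ hp) fun z hz hz0 =>
      mem_segment_of_orient_eq_zero (g₁ := a) (g₂ := p) (h₁ := c) (h₂ := a) hz0
        (hP.orient_neg 0 2 1) (hP.orient_pos 0 2 5) ?_
        (hP.orient_neg 4 0 5) (hP.orient_pos 4 0 1) ?_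
    · exact orient_nonneg_of_mem_segment hz (orient_self₂₃ a p).ge
        (orient_nonneg_of_mem_segment hX (orient_self₁₃ a p).ge (hP.orient_pos 0 2 4).le)
    · exact orient_nonneg_of_mem_segment hz (hP.orient_pos 4 0 2).le
        (orient_eq_zero_of_mem_segment (segment_symm ℝ a c ▸ hX)).ge
  have hYac : orient a c Y < 0 := by
    refine orient_neg_of_dist_lt_infDist (hP.orient_neg 0 4 3) (hqY ▸ hq) fun z hz hz0 =>
      mem_segment_of_orient_eq_zero (g₁ := d) (g₂ := b) (h₁ := q) (h₂ := d) hz0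
        (hP.orient_neg 5 1 0) (hP.orient_pos 5 1 4) ?_
        (hP.orient_neg 3 5 4) (hP.orient_pos 3 5 0) ?_
    · exact orient_nonneg_of_mem_segment hz (hP.orient_pos 5 1 3).le
        (orient_eq_zero_of_mem_segment (segment_symm ℝ b d ▸ hY)).ge
    · exact orient_nonneg_of_mem_segment hz (orient_self₁₃ q d).ge
        (orient_nonneg_of_mem_segment hY (hP.orient_pos 3 5 1).le (orient_self₂₃ q d).ge)
  obtain ⟨z, hzp, hzq⟩ := segment_inter_nonempty_of_convexCCWTuple hP hX hXbd hY hYac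
  linarith [dist_add_dist_le_of_mem_segment hzp hzq, infDist_le_dist_of_mem (x := p) hY,
    infDist_le_dist_of_mem (x := q) hX]

theorem cBtw_add_natCast {n : ℕ} (i : ZMod n) {x y z : ℕ} (hxy : x < y) (hyz : y < z)
    (hz : z < n) : CBtw (i + (x : ZMod n)) (i + (y : ZMod n)) (i + (z : ZMod n)) := by
  have hsub : ∀ {x y : ℕ}, x ≤ y → (i + y) - (i + x) = ((y - x : ℕ) : ZMod n) :=
    fun h => by push_cast [Nat.cast_sub h]; ring
  rw [CBtw, hsub hxy.le, hsub (hxy.trans hyz).le, ZMod.val_cast_of_lt (by omega),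
    ZMod.val_cast_of_lt (by omega)]
  omega

theorem CBtw.val_sub_le {n m : ℕ} {i x : ZMod n} (hm : m + 1 < n) (h : CBtw i x (i + m + 1)) :
    (x - i).val ≤ m := by
  have h₂ := h.2
  rw [add_assoc, add_sub_cancel_left, ← Nat.cast_add_one, ZMod.val_cast_of_lt hm] at h₂
  omega

theorem ConvexCCW.convexCCWTuple {n k : ℕ} {v : ZMod n → Pt} (hv : ConvexCCW v) (i : ZMod n)
    {o : Fin k → ℕ} (ho : StrictMono o) (hon : ∀ j, o j < n) :
    ConvexCCWTuple fun j => v (i + o j) :=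
  fun _ _ _ h₁ h₂ => hv _ _ _ (cBtw_add_natCast i (ho h₁) (ho h₂) (hon _))

def IsUniqueWitness {n : ℕ} (v : ZMod n → Pt) (σ : ℝ) (i j x : ZMod n) : Prop :=
  CBtw i x j ∧ σ < infDist (v x) (segment ℝ (v i) (v j)) ∧
    ∀ y, CBtw i y j → y ≠ x → infDist (v y) (segment ℝ (v i) (v j)) ≤ σ

theorem val_sub_le_val_sub_add_one {n m : ℕ} [NeZero n] {σ : ℝ} {v : ZMod n → Pt}
    {w : ZMod n → ZMod n} (hn : m + 2 < n) (hv : ConvexCCW v) (hw : Function.Injective w)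
    (hwit : ∀ i, IsUniqueWitness v σ i (i + m + 1) (w i)) (i : ZMod n) :
    (w i - i).val ≤ (w (i + 1) - (i + 1)).val := by
  set s := (w i - i).val with hs_def
  set t := (w (i + 1) - (i + 1)).val with ht_def
  have hs : w i = i + s := by rw [hs_def, ZMod.natCast_zmod_val]; ring
  have ht : w (i + 1) = i + (t + 1 : ℕ) := by
    rw [Nat.cast_add_one, ht_def, ZMod.natCast_zmod_val]; ring
  have hsm : s ≤ m := (hwit i).1.val_sub_le (by omega)
  have ht0 : 0 < t := (hwit (i + 1)).1.1
  by_contra! hts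
  have hne : w (i + 1) ≠ w i := by
    have : (1 : ZMod n) ≠ 0 := by
      have : Fact (1 < n) := ⟨by omega⟩
      exact one_ne_zero
    exact hw.ne fun h => this (by simpa using congrArg (· - i) h)
  have hts' : t + 1 < s := by
    by_contra h
    exact hne (by rw [hs, ht, show t + 1 = s by omega])
  have hP : ConvexCCWTuple
      ![v i, v (i + 1), v (w (i + 1)), v (w i), v (i + m + 1), v (i + 1 + m + 1)] := by
    convert hv.convexCCWTuple i (o := ![0, 1, t + 1, s, m + 1, m + 2])
      (Fin.strictMono_iff_lt_succ.2 fun j => by fin_cases j <;> simp <;> omega)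
      (fun j => by fin_cases j <;> simp <;> omega) using 1
    funext j
    fin_cases j <;> simp [hs, ht] <;> ring_nf
  have hp_cbtw : CBtw i (w (i + 1)) (i + m + 1) := by
    convert cBtw_add_natCast i (x := 0) (y := t + 1) (z := m + 1) (by omega) (by omega) (by omega)
      using 1 <;> push_cast [ht] <;> ring
  have hq_cbtw : CBtw (i + 1) (w i) (i + 1 + m + 1) := by
    convert cBtw_add_natCast i (x := 1) (y := s) (z := m + 2) (by omega) (by omega) (by omega)
      using 1 <;> push_cast [hs] <;> ring
  exact (infDist_le_of_convexCCWTuple hP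
    (((hwit i).2.2 _ hp_cbtw hne).trans_lt (hwit (i + 1)).2.1)).not_gt
    (((hwit (i + 1)).2.2 _ hq_cbtw hne.symm).trans_lt (hwit i).2.1)

theorem witness_at_constant_offset_general (n m : ℕ) [NeZero n] (hn : m + 2 < n)
    (σ : ℝ)
    (v : ZMod n → Pt) (hconv : ConvexCCW v)
    (w : ZMod n → ZMod n) (hbij : Function.Bijective w)
    (hwit : ∀ i : ZMod n, CBtw i (w i) (i + (m : ZMod n) + 1) ∧
      σ < Metric.infDist (v (w i)) (segment ℝ (v i) (v (i + (m : ZMod n) + 1))) ∧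
      ∀ x : ZMod n, CBtw i x (i + (m : ZMod n) + 1) → x ≠ w i →
        Metric.infDist (v x) (segment ℝ (v i) (v (i + (m : ZMod n) + 1))) ≤ σ) :
    ∃ r : ℕ, 0 < r ∧ r ≤ m ∧ ∀ i : ZMod n, w i = i + (r : ZMod n) := by
  have hconst := ZMod.apply_eq_of_forall_le_apply_add_one (f := fun i => (w i - i).val)
    (val_sub_le_val_sub_add_one hn hconv hbij.injective hwit)
  refine ⟨(w 0 - 0).val, (hwit 0).1.1, (hwit 0).1.val_sub_le (by omega), fun i => ?_⟩
  rw [← hconst i 0, ZMod.natCast_zmod_val]; ring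

theorem witness_at_constant_offset (n m : ℕ) [NeZero n] (hm : 1 ≤ m) (hn : m + 2 < n)
    (σ : ℝ) (hσ : 0 < σ)
    (v : ZMod n → Pt) (hconv : ConvexCCW v)
    (w : ZMod n → ZMod n) (hbij : Function.Bijective w)
    (hwit : ∀ i : ZMod n, CBtw i (w i) (i + (m : ZMod n) + 1) ∧
      σ < Metric.infDist (v (w i)) (segment ℝ (v i) (v (i + (m : ZMod n) + 1))) ∧
      ∀ x : ZMod n, CBtw i x (i + (m : ZMod n) + 1) → x ≠ w i →
        Metric.infDist (v x) (segment ℝ (v i) (v (i + (m : ZMod n) + 1))) ≤ σ) :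
    ∃ r : ℕ, 0 < r ∧ r ≤ m ∧ ∀ i : ZMod n, w i = i + (r : ZMod n) :=
  witness_at_constant_offset_general n m hn σ v hconv w hbij hwit
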